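/- arXiv:2401.05599 — 2 statements merged into one kernel-verified Lean document; each statement's English description precedes it below -/
import Mathlib

section
/- Assume ρw ≤ ρn, δn ≤ δw, and let L ≥ 0 and T > 0. Let x, y : [0,T] → ℝ be differentiable functions with x(t) ≥ 0, y(t) ≥ 0, x(t) + y(t) > 0 for all t ∈ [0,T], satisfying x'(t) = F₁(x(t), y(t)) and y'(t) = F₂(x(t), y(t)) + u(t) with 0 ≤ u(t) ≤ L for all t ∈ [0,T]. Then for every t ∈ [0,T], x(t) + y(t) ≤ max( x(0) + y(0), (ρn/(σ·e) + L)/δn ); i.e. solutions of the controlled system with bounded control remain bounded. -/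
/-- First component of the uncontrolled vector field. -/
noncomputable def F1 (ρn ρw δn σ ν η ω : ℝ) (x y : ℝ) : ℝ :=
  (ρn * x * (x + (1 - η) * y) / (x + y) + (1 - ν) * ρw * y) * Real.exp (-σ * (x + y))
    + ω * y - δn * x

/-- Second component of the uncontrolled vector field. -/
noncomputable def F2 (ρw δw σ ν ω : ℝ) (x y : ℝ) : ℝ :=
  ν * ρw * y * Real.exp (-σ * (x + y)) - ω * y - δw * y

/-!
The total population `N = x + y` satisfies `N' ≤ ρn · N e^{-σN} - δn N + u`: the
`(1 - ν)`/`ν` split of the `y`-births and the `ω`-transfers cancel in the sum, `x` and `y`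
give birth at rate at most `ρn`, and `y` dies at rate at least `δn`. Since `N e^{-σN} ≤ 1/(σe)`,
this gives `N' ≤ δn (K - N)` with `K = (ρn/(σe) + L)/δn`, so `e^{δn t}(N - K)` is antitone and
`N` never exceeds `max (N 0) K`.
-/

open Real Set

theorem mul_exp_neg_mul_le {σ : ℝ} (hσ : 0 < σ) (z : ℝ) :
    z * exp (-σ * z) ≤ 1 / (σ * exp 1) :=
  calc z * exp (-σ * z) = σ * z * exp (-(σ * z)) / σ := by field_simp
    _ ≤ exp (-1) / σ := by gcongr; exact mul_exp_neg_le_exp_neg_one _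
    _ = 1 / (σ * exp 1) := by rw [exp_neg]; field_simp

theorem F1_add_F2_le {ρn ρw δn δw σ ν η ω x y : ℝ} (hρn : 0 ≤ ρn) (hσ : 0 < σ) (hη : 0 ≤ η)
    (hρ : ρw ≤ ρn) (hδ : δn ≤ δw) (hx : 0 ≤ x) (hy : 0 ≤ y) :
    F1 ρn ρw δn σ ν η ω x y + F2 ρw δw σ ν ω x y ≤ ρn / (σ * exp 1) - δn * (x + y) := by
  set E := exp (-σ * (x + y))
  have hE : 0 ≤ E := (exp_pos _).le
  have hx_births : x * (x + (1 - η) * y) / (x + y) ≤ x :=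
    div_le_of_le_mul₀ (by positivity) hx (by nlinarith [mul_nonneg (mul_nonneg hx hη) hy])
  have hsum : F1 ρn ρw δn σ ν η ω x y + F2 ρw δw σ ν ω x y
      = ρn * (x * (x + (1 - η) * y) / (x + y)) * E + ρw * y * E - δn * x - δw * y := by
    simp only [F1, F2, E]; ring
  calc F1 ρn ρw δn σ ν η ω x y + F2 ρw δw σ ν ω x y
      ≤ ρn * x * E + ρn * y * E - δn * x - δn * y := by
        rw [hsum]
        gcongr ?_ + ?_ - _ - ?_
        · exact mul_le_mul_of_nonneg_right (mul_le_mul_of_nonneg_left hx_births hρn) hE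
        · exact mul_le_mul_of_nonneg_right (mul_le_mul_of_nonneg_right hρ hy) hE
        · exact mul_le_mul_of_nonneg_right hδ hy
    _ = ρn * ((x + y) * E) - δn * (x + y) := by ring
    _ ≤ ρn / (σ * exp 1) - δn * (x + y) := by
        gcongr
        calc ρn * ((x + y) * E) ≤ ρn * (1 / (σ * exp 1)) :=
              mul_le_mul_of_nonneg_left (mul_exp_neg_mul_le hσ _) hρn
          _ = ρn / (σ * exp 1) := mul_one_div _ _

theorem le_max_of_hasDerivAt_le_mul_sub {f f' : ℝ → ℝ} {a b c K : ℝ} (hc : 0 ≤ c)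
    (hf : ∀ t ∈ Icc a b, HasDerivAt f (f' t) t) (hf' : ∀ t ∈ Icc a b, f' t ≤ c * (K - f t)) :
    ∀ t ∈ Icc a b, f t ≤ max (f a) K := by
  set W : ℝ → ℝ := fun t => exp (c * t) * (f t - K)
  have hW : ∀ t ∈ Icc a b, HasDerivAt W (exp (c * t) * c * (f t - K) + exp (c * t) * f' t) t :=
    fun t ht => by
      have hexp : HasDerivAt (fun s => exp (c * s)) (exp (c * t) * c) t := by
        simpa using ((hasDerivAt_id t).const_mul c).exp
      exact hexp.mul ((hf t ht).sub_const K)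
  have hW_anti : AntitoneOn W (Icc a b) := by
    refine antitoneOn_of_hasDerivWithinAt_nonpos (convex_Icc a b)
      (fun t ht => (hW t ht).continuousAt.continuousWithinAt)
      (fun t ht => (hW t (interior_subset ht)).hasDerivWithinAt) fun t ht => ?_
    have h := hf' t (interior_subset ht)
    have : exp (c * t) * (c * (f t - K) + f' t) ≤ 0 :=
      mul_nonpos_of_nonneg_of_nonpos (exp_pos _).le (by linarith)
    linarith
  intro t ht
  rcases le_or_gt (f t) K with hK | hK
  · exact le_max_of_le_right hK
  · have hWt : W t ≤ W a := hW_anti (left_mem_Icc.2 (ht.1.trans ht.2)) ht ht.1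
    have hexp : exp (c * a) ≤ exp (c * t) := exp_le_exp.2 (mul_le_mul_of_nonneg_left ht.1 hc)
    have : exp (c * a) * (f t - K) ≤ exp (c * a) * (f a - K) :=
      (mul_le_mul_of_nonneg_right hexp (by linarith)).trans hWt
    exact le_max_of_le_left (by linarith [le_of_mul_le_mul_left this (exp_pos _)])

theorem controlled_solutions_bounded_general
    (ρn ρw δn δw σ ν η ω : ℝ)
    (hρn : 0 < ρn) (hδn : 0 < δn) (hσ : 0 < σ)
    (hη0 : 0 ≤ η)
    (hρ : ρw ≤ ρn) (hδ : δn ≤ δw)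
    (L : ℝ) (T : ℝ)
    (x y u : ℝ → ℝ)
    (hx0 : ∀ t ∈ Set.Icc (0 : ℝ) T, 0 ≤ x t)
    (hy0 : ∀ t ∈ Set.Icc (0 : ℝ) T, 0 ≤ y t)
    (hu : ∀ t ∈ Set.Icc (0 : ℝ) T, 0 ≤ u t ∧ u t ≤ L)
    (hx' : ∀ t ∈ Set.Icc (0 : ℝ) T, HasDerivAt x (F1 ρn ρw δn σ ν η ω (x t) (y t)) t)
    (hy' : ∀ t ∈ Set.Icc (0 : ℝ) T, HasDerivAt y (F2 ρw δw σ ν ω (x t) (y t) + u t) t) :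
    ∀ t ∈ Set.Icc (0 : ℝ) T,
      x t + y t ≤ max (x 0 + y 0) ((ρn / (σ * Real.exp 1) + L) / δn) := by
  refine le_max_of_hasDerivAt_le_mul_sub (f := fun t => x t + y t) hδn.le
    (fun t ht => (hx' t ht).add (hy' t ht)) fun t ht => ?_
  have hF := F1_add_F2_le (ν := ν) (ω := ω) hρn.le hσ hη0 hρ hδ (hx0 t ht) (hy0 t ht)
  calc F1 ρn ρw δn σ ν η ω (x t) (y t) + (F2 ρw δw σ ν ω (x t) (y t) + u t)
      ≤ ρn / (σ * exp 1) - δn * (x t + y t) + L := by linarith [(hu t ht).2]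
    _ = δn * ((ρn / (σ * exp 1) + L) / δn - (x t + y t)) := by field_simp; ring

/-- solutions of the controlled system with bounded control
0 ≤ u(t) ≤ L remain bounded: x(t)+y(t) ≤ max(x(0)+y(0), (ρn/(σe)+L)/δn). -/
theorem controlled_solutions_bounded
    (ρn ρw δn δw σ ν η ω : ℝ)
    (hρn : 0 < ρn) (hρw : 0 < ρw) (hδn : 0 < δn) (hδw : 0 < δw) (hσ : 0 < σ)
    (hν0 : 0 ≤ ν) (hν1 : ν ≤ 1) (hη0 : 0 ≤ η) (hη1 : η ≤ 1) (hω : 0 ≤ ω)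
    (hρ : ρw ≤ ρn) (hδ : δn ≤ δw)
    (L : ℝ) (hL : 0 ≤ L) (T : ℝ) (hT : 0 < T)
    (x y u : ℝ → ℝ)
    (hx0 : ∀ t ∈ Set.Icc (0 : ℝ) T, 0 ≤ x t)
    (hy0 : ∀ t ∈ Set.Icc (0 : ℝ) T, 0 ≤ y t)
    (hxy : ∀ t ∈ Set.Icc (0 : ℝ) T, 0 < x t + y t)
    (hu : ∀ t ∈ Set.Icc (0 : ℝ) T, 0 ≤ u t ∧ u t ≤ L)
    (hx' : ∀ t ∈ Set.Icc (0 : ℝ) T, HasDerivAt x (F1 ρn ρw δn σ ν η ω (x t) (y t)) t)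
    (hy' : ∀ t ∈ Set.Icc (0 : ℝ) T, HasDerivAt y (F2 ρw δw σ ν ω (x t) (y t) + u t) t) :
    ∀ t ∈ Set.Icc (0 : ℝ) T,
      x t + y t ≤ max (x 0 + y 0) ((ρn / (σ * Real.exp 1) + L) / δn) :=
  controlled_solutions_bounded_general ρn ρw δn δw σ ν η ω hρn hδn hσ hη0 hρ hδ L T x y u hx0 hy0 hu
    hx' hy'
end

section
/- Assume ρw ≤ ρn, δn ≤ δw, and Q_x > 1, and let T > 0. Let x, y : [0,T] → ℝ be differentiable functions with x(t) ≥ 0, y(t) ≥ 0, x(t) + y(t) > 0 for all t ∈ [0,T], satisfying the uncontrolled system x'(t) = F₁(x(t), y(t)) and y'(t) = F₂(x(t), y(t)). If x(0) + y(0) ≤ (1/σ)·ln Q_x, then x(t) + y(t) ≤ (1/σ)·ln Q_x for all t ∈ [0,T]; i.e. the set Ω = {(x,y) ∈ ℝ₊² : x + y ≤ (1/σ)·ln Q_x} is forward invariant. -/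
/-!
The total population `N = x + y` obeys `N' = (ρn x (x + (1-η) y)/N + ρw y) e^{-σN} - δn x - δw y`.
Since `η ≥ 0` and `ρw ≤ ρn`, the birth term is at most `ρn N e^{-σN}`, and above the level
`N* = (1/σ) ln (ρn/δn)` we have `ρn e^{-σN} < δn`; with `δn ≤ δw` this gives `N' < 0` there.
A function that strictly decreases wherever it exceeds `N*` cannot cross `N*` from below.
-/

open Real Set

/-- The fencing lemma `image_le_of_deriv_right_lt_deriv_boundary` needs `f' < 0` on the barrier
itself; here `f'` may vanish where `f = M`, so it is applied to the barriers `M + ε` instead. -/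
theorem image_le_of_deriv_right_neg_of_lt {f f' : ℝ → ℝ} {a b M : ℝ}
    (hf : ContinuousOn f (Icc a b)) (hf' : ∀ x ∈ Ico a b, HasDerivWithinAt f (f' x) (Ici x) x)
    (ha : f a ≤ M) (hneg : ∀ x ∈ Ico a b, M < f x → f' x < 0) :
    ∀ x ∈ Icc a b, f x ≤ M := by
  intro x hx
  refine le_of_forall_pos_le_add fun ε hε => ?_
  refine image_le_of_deriv_right_lt_deriv_boundary (B := fun _ => M + ε) (B' := fun _ => 0)
    hf hf' (by linarith) (fun _ => hasDerivAt_const _ _) (fun t ht hft => ?_) hx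
  exact hneg t ht (by linarith)

theorem mul_exp_neg_lt_of_log_div_lt {a b σ s : ℝ} (ha : 0 < a) (hb : 0 < b) (hσ : 0 < σ)
    (hs : 1 / σ * log (a / b) < s) : a * exp (-σ * s) < b := by
  have hlog : log (a / b) < σ * s := by
    rwa [one_div, inv_mul_lt_iff₀ hσ] at hs
  calc a * exp (-σ * s) < a * exp (-log (a / b)) := by gcongr; linarith
    _ = b := by rw [exp_neg, exp_log (by positivity), inv_div]; field_simp

theorem F1_add_F2 (ρn ρw δn δw σ ν η ω x y : ℝ) :
    F1 ρn ρw δn σ ν η ω x y + F2 ρw δw σ ν ω x y =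
      (ρn * x * (x + (1 - η) * y) / (x + y) + ρw * y) * exp (-σ * (x + y)) - δn * x - δw * y := by
  unfold F1 F2
  ring

theorem birth_rate_le {ρn ρw η x y : ℝ} (hρn : 0 ≤ ρn) (hρ : ρw ≤ ρn) (hη : 0 ≤ η)
    (hx : 0 ≤ x) (hy : 0 ≤ y) (hxy : 0 < x + y) :
    ρn * x * (x + (1 - η) * y) / (x + y) + ρw * y ≤ ρn * (x + y) := by
  have hxbirths : ρn * x * (x + (1 - η) * y) / (x + y) ≤ ρn * x := by
    rw [div_le_iff₀ hxy]
    nlinarith [mul_nonneg (mul_nonneg hρn hx) (mul_nonneg hη hy)]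
  nlinarith

theorem F1_add_F2_neg {ρn ρw δn δw σ ν η ω x y : ℝ} (hρn : 0 < ρn) (hδn : 0 < δn) (hσ : 0 < σ)
    (hη : 0 ≤ η) (hρ : ρw ≤ ρn) (hδ : δn ≤ δw) (hQx : ρn / δn > 1) (hx : 0 ≤ x) (hy : 0 ≤ y)
    (hlevel : 1 / σ * log (ρn / δn) < x + y) :
    F1 ρn ρw δn σ ν η ω x y + F2 ρw δw σ ν ω x y < 0 := by
  have hxy : 0 < x + y := lt_trans (by have := log_pos hQx; positivity) hlevel
  have hbirth := birth_rate_le hρn.le hρ hη hx hy hxy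
  have hdeath := mul_exp_neg_lt_of_log_div_lt hρn hδn hσ hlevel
  have hE := exp_pos (-σ * (x + y))
  rw [F1_add_F2]
  linarith [mul_le_mul_of_nonneg_right hbirth hE.le, mul_lt_mul_of_pos_left hdeath hxy,
    mul_le_mul_of_nonneg_right hδ hy]

theorem absorbing_set_forward_invariant_general
    (ρn ρw δn δw σ ν η ω : ℝ)
    (hρn : 0 < ρn) (hδn : 0 < δn) (hσ : 0 < σ)
    (hη0 : 0 ≤ η)
    (hρ : ρw ≤ ρn) (hδ : δn ≤ δw) (hQx : ρn / δn > 1)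
    (T : ℝ)
    (x y : ℝ → ℝ)
    (hx0 : ∀ t ∈ Set.Icc (0 : ℝ) T, 0 ≤ x t)
    (hy0 : ∀ t ∈ Set.Icc (0 : ℝ) T, 0 ≤ y t)
    (hx' : ∀ t ∈ Set.Icc (0 : ℝ) T, HasDerivAt x (F1 ρn ρw δn σ ν η ω (x t) (y t)) t)
    (hy' : ∀ t ∈ Set.Icc (0 : ℝ) T, HasDerivAt y (F2 ρw δw σ ν ω (x t) (y t)) t)
    (h0 : x 0 + y 0 ≤ (1 / σ) * Real.log (ρn / δn)) :
    ∀ t ∈ Set.Icc (0 : ℝ) T, x t + y t ≤ (1 / σ) * Real.log (ρn / δn) := by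
  have hsum : ∀ t ∈ Icc 0 T, HasDerivAt (fun s => x s + y s)
      (F1 ρn ρw δn σ ν η ω (x t) (y t) + F2 ρw δw σ ν ω (x t) (y t)) t :=
    fun t ht => (hx' t ht).add (hy' t ht)
  refine image_le_of_deriv_right_neg_of_lt
    (fun t ht => (hsum t ht).continuousAt.continuousWithinAt)
    (fun t ht => (hsum t (Ico_subset_Icc_self ht)).hasDerivWithinAt) h0 ?_
  intro t ht hlevel
  have ht' := Ico_subset_Icc_self ht
  exact F1_add_F2_neg hρn hδn hσ hη0 hρ hδ hQx (hx0 t ht') (hy0 t ht') hlevel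

/-- the region Ω = {(x,y) ∈ ℝ₊² : x+y ≤ (1/σ)·ln Q_x} is forward
invariant for the uncontrolled system. -/
theorem absorbing_set_forward_invariant
    (ρn ρw δn δw σ ν η ω : ℝ)
    (hρn : 0 < ρn) (hρw : 0 < ρw) (hδn : 0 < δn) (hδw : 0 < δw) (hσ : 0 < σ)
    (hν0 : 0 ≤ ν) (hν1 : ν ≤ 1) (hη0 : 0 ≤ η) (hη1 : η ≤ 1) (hω : 0 ≤ ω)
    (hρ : ρw ≤ ρn) (hδ : δn ≤ δw) (hQx : ρn / δn > 1)
    (T : ℝ) (hT : 0 < T)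
    (x y : ℝ → ℝ)
    (hx0 : ∀ t ∈ Set.Icc (0 : ℝ) T, 0 ≤ x t)
    (hy0 : ∀ t ∈ Set.Icc (0 : ℝ) T, 0 ≤ y t)
    (hxy : ∀ t ∈ Set.Icc (0 : ℝ) T, 0 < x t + y t)
    (hx' : ∀ t ∈ Set.Icc (0 : ℝ) T, HasDerivAt x (F1 ρn ρw δn σ ν η ω (x t) (y t)) t)
    (hy' : ∀ t ∈ Set.Icc (0 : ℝ) T, HasDerivAt y (F2 ρw δw σ ν ω (x t) (y t)) t)
    (h0 : x 0 + y 0 ≤ (1 / σ) * Real.log (ρn / δn)) :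
    ∀ t ∈ Set.Icc (0 : ℝ) T, x t + y t ≤ (1 / σ) * Real.log (ρn / δn) :=
  absorbing_set_forward_invariant_general ρn ρw δn δw σ ν η ω hρn hδn hσ hη0 hρ hδ hQx T x y hx0 hy0
    hx' hy' h0
end
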